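/- arXiv:1403.1541 — 6 statements merged into one kernel-verified Lean document; each statement's English description precedes it below -/
import Mathlib

section
/- Let x1, x1', x2, x2' be integers with x1 ≠ x1'. Then the set {g ∈ ℝ : ⌊g·x1⌋ + x2 = ⌊g·x1'⌋ + x2'} of channel realizations under which the two codewords cast the same image has Lebesgue measure at most 2/|x1 − x1'|. -/
open MeasureTheory

/-- The set of channel realizations under which two codewords with distinct
first components cast the same image has Lebesgue measure at most
`2/|x1 − x1'|`. -/
theorem alignment_set_volume_le
    (x1 x2 x1' x2' : ℤ) (h : x1 ≠ x1') :
    volume {g : ℝ | ⌊g * (x1 : ℝ)⌋ + x2 = ⌊g * (x1' : ℝ)⌋ + x2'} ≤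
      ENNReal.ofReal (2 / |(x1 : ℝ) - (x1' : ℝ)|) := by
  set d : ℝ := (x1 : ℝ) - (x1' : ℝ) with hdef
  have hd : d ≠ 0 := by
    simp only [hdef, sub_ne_zero]
    exact_mod_cast h
  set c : ℝ := ((x2' : ℝ) - (x2 : ℝ)) with hc
  have key : ∀ g : ℝ, ⌊g * (x1 : ℝ)⌋ + x2 = ⌊g * (x1' : ℝ)⌋ + x2' →
      c - 1 < g * d ∧ g * d < c + 1 := by
    intro g hg
    have h1 : (⌊g * (x1 : ℝ)⌋ : ℝ) ≤ g * x1 := Int.floor_le _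
    have h2 : g * (x1 : ℝ) < ⌊g * (x1 : ℝ)⌋ + 1 := Int.lt_floor_add_one _
    have h3 : (⌊g * (x1' : ℝ)⌋ : ℝ) ≤ g * x1' := Int.floor_le _
    have h4 : g * (x1' : ℝ) < ⌊g * (x1' : ℝ)⌋ + 1 := Int.lt_floor_add_one _
    have heq : (⌊g * (x1 : ℝ)⌋ : ℝ) + x2 = (⌊g * (x1' : ℝ)⌋ : ℝ) + x2' := by
      exact_mod_cast congrArg (fun n : ℤ => (n : ℝ)) hg
    have hgd : g * d = g * x1 - g * x1' := by rw [hdef]; ring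
    constructor <;> [nlinarith; nlinarith]
  rcases lt_or_gt_of_ne hd with hneg | hpos
  · have hsub : {g : ℝ | ⌊g * (x1 : ℝ)⌋ + x2 = ⌊g * (x1' : ℝ)⌋ + x2'} ⊆
        Set.Ioo ((c + 1) / d) ((c - 1) / d) := by
      intro g hg
      obtain ⟨h1, h2⟩ := key g hg
      constructor
      · rw [div_lt_iff_of_neg hneg]; linarith [mul_comm g d]
      · rw [lt_div_iff_of_neg hneg]; linarith [mul_comm g d]
    calc volume _ ≤ volume (Set.Ioo ((c + 1) / d) ((c - 1) / d)) := measure_mono hsub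
      _ = ENNReal.ofReal ((c - 1) / d - (c + 1) / d) := Real.volume_Ioo
      _ ≤ ENNReal.ofReal (2 / |d|) := by
          apply ENNReal.ofReal_le_ofReal
          rw [abs_of_neg hneg, div_sub_div_same, show c - 1 - (c + 1) = -2 by ring]
          rw [neg_div, ← div_neg]
  · have hsub : {g : ℝ | ⌊g * (x1 : ℝ)⌋ + x2 = ⌊g * (x1' : ℝ)⌋ + x2'} ⊆
        Set.Ioo ((c - 1) / d) ((c + 1) / d) := by
      intro g hg
      obtain ⟨h1, h2⟩ := key g hg
      constructor
      · rw [div_lt_iff₀ hpos]; linarith [mul_comm g d]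
      · rw [lt_div_iff₀ hpos]; linarith [mul_comm g d]
    calc volume _ ≤ volume (Set.Ioo ((c - 1) / d) ((c + 1) / d)) := measure_mono hsub
      _ = ENNReal.ofReal ((c + 1) / d - (c - 1) / d) := Real.volume_Ioo
      _ ≤ ENNReal.ofReal (2 / |d|) := by
          apply ENNReal.ofReal_le_ofReal
          rw [abs_of_pos hpos, div_sub_div_same]
          rw [show c + 1 - (c - 1) = 2 by ring]
end

section
/- Let μ be a probability measure on ℝ and f_max > 0 a real number such that μ(A) ≤ f_max · λ(A) for every measurable set A ⊆ ℝ, where λ is Lebesgue measure. Let x1, x1', x2, x2' be integers with x1 ≠ x1'. Then μ({g ∈ ℝ : ⌊g·x1⌋ + x2 = ⌊g·x1'⌋ + x2'}) ≤ 2·f_max / |x1 − x1'|, i.e., the probability that the two codewords cast aligned images at receiver 2 under a channel with density bounded by f_max is at most 2·f_max/|x1 − x1'|. -/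
open MeasureTheory

/-- Under a channel distribution with density bounded by `f_max`, the
probability that two codewords with distinct first components cast aligned
images at receiver 2 is at most `2·f_max/|x1 − x1'|`. -/
theorem alignment_prob_le
    (μ : Measure ℝ) [IsProbabilityMeasure μ] (f_max : ℝ) (hf : 0 < f_max)
    (hμ : ∀ A : Set ℝ, MeasurableSet A →
      μ A ≤ ENNReal.ofReal f_max * volume A)
    (x1 x2 x1' x2' : ℤ) (h : x1 ≠ x1') :
    μ {g : ℝ | ⌊g * (x1 : ℝ)⌋ + x2 = ⌊g * (x1' : ℝ)⌋ + x2'} ≤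
      ENNReal.ofReal (2 * f_max / |(x1 : ℝ) - (x1' : ℝ)|) := by
  set d : ℝ := (x1 : ℝ) - (x1' : ℝ) with hdd
  have hd0 : d ≠ 0 := sub_ne_zero.mpr (by exact_mod_cast h)
  set c : ℝ := (x2' : ℝ) - (x2 : ℝ) with hcc
  -- the interval that contains the alignment set
  obtain ⟨a, b, hIoo, hlen⟩ :
      ∃ a b : ℝ, {g : ℝ | g * d ∈ Set.Ioo (c - 1) (c + 1)} = Set.Ioo a b ∧
        b - a = 2 / |d| := by
    rcases lt_or_gt_of_ne hd0 with hd | hd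
    · refine ⟨(c + 1) / d, (c - 1) / d, ?_, ?_⟩
      · ext g
        simp only [Set.mem_setOf_eq, Set.mem_Ioo]
        rw [div_lt_iff_of_neg hd, lt_div_iff_of_neg hd]
        tauto
      · rw [abs_of_neg hd, div_sub_div_same,
          show c - 1 - (c + 1) = -2 by ring, neg_div, div_neg]
    · refine ⟨(c - 1) / d, (c + 1) / d, ?_, ?_⟩
      · ext g
        simp only [Set.mem_setOf_eq, Set.mem_Ioo]
        rw [div_lt_iff₀ hd, lt_div_iff₀ hd]
      · rw [abs_of_pos hd, div_sub_div_same, show c + 1 - (c - 1) = 2 by ring]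
  have hsub : {g : ℝ | ⌊g * (x1 : ℝ)⌋ + x2 = ⌊g * (x1' : ℝ)⌋ + x2'} ⊆
      Set.Ioo a b := by
    rw [← hIoo]
    intro g hg
    simp only [Set.mem_setOf_eq, Set.mem_Ioo] at hg ⊢
    have heq : (⌊g * (x1:ℝ)⌋ : ℝ) + x2 = (⌊g * (x1':ℝ)⌋ : ℝ) + x2' := by
      exact_mod_cast congrArg (fun z : ℤ => (z : ℝ)) hg
    have h1 : (⌊g * (x1:ℝ)⌋ : ℝ) ≤ g * x1 := Int.floor_le _
    have h2 : g * (x1:ℝ) - 1 < ⌊g * (x1:ℝ)⌋ := Int.sub_one_lt_floor _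
    have h3 : (⌊g * (x1':ℝ)⌋ : ℝ) ≤ g * x1' := Int.floor_le _
    have h4 : g * (x1':ℝ) - 1 < ⌊g * (x1':ℝ)⌋ := Int.sub_one_lt_floor _
    have hgd : g * d = g * (x1:ℝ) - g * (x1':ℝ) := by rw [hdd]; ring
    exact ⟨by rw [hcc] at *; linarith, by rw [hcc] at *; linarith⟩
  calc μ {g : ℝ | ⌊g * (x1 : ℝ)⌋ + x2 = ⌊g * (x1' : ℝ)⌋ + x2'}
      ≤ μ (Set.Ioo a b) := measure_mono hsub
    _ ≤ ENNReal.ofReal f_max * volume (Set.Ioo a b) := hμ _ measurableSet_Ioo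
    _ = ENNReal.ofReal f_max * ENNReal.ofReal (2 / |d|) := by
        rw [Real.volume_Ioo, hlen]
    _ = ENNReal.ofReal (2 * f_max / |d|) := by
        rw [← ENNReal.ofReal_mul hf.le]
        congr 1
        ring
end

section
/- Let n ≥ 1 and let μ be a probability measure on ℝⁿ (the joint law of the channel coefficients G(1),…,G(n)) and f_max ≥ 1 a real number, such that for every nonempty subset s ⊆ {1,…,n} and every measurable set B ⊆ ℝ^s, the probability under μ that the coordinates indexed by s fall in B is at most f_max^{|s|} times the |s|-dimensional Lebesgue measure of B. Let x, ν : {1,…,n} → ℤ be two codewords with x ≠ ν, and let x2, ν2 : {1,…,n} → ℤ be arbitrary (the second-antenna symbols associated to x and ν). Let s = {t : x(t) ≠ ν(t)}. Then μ({g ∈ ℝⁿ : ⌊g(t)·x(t)⌋ + x2(t) = ⌊g(t)·ν(t)⌋ + ν2(t) for all t}) ≤ f_max^{|s|} · ∏_{t ∈ s} 2/|x(t) − ν(t)|. -/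
open MeasureTheory

lemma floor_align_subset_ball (a b : ℤ) (hab : (a : ℝ) ≠ b) (c : ℤ) :
    {r : ℝ | ⌊r * (a : ℝ)⌋ - ⌊r * (b : ℝ)⌋ = c} ⊆
      Metric.ball ((c : ℝ) / ((a : ℝ) - b)) (1 / |(a : ℝ) - b|) := by
  intro r hr
  simp only [Set.mem_setOf_eq] at hr
  have hd : (a : ℝ) - b ≠ 0 := sub_ne_zero.mpr hab
  have h1 : ((c : ℝ)) < r * ((a : ℝ) - b) + 1 := by
    have hA : ((⌊r * (a : ℝ)⌋ : ℝ)) ≤ r * (a : ℝ) := Int.floor_le _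
    have hB : r * (b : ℝ) - 1 < (⌊r * (b : ℝ)⌋ : ℝ) := Int.sub_one_lt_floor _
    have : (c : ℝ) = (⌊r * (a : ℝ)⌋ : ℝ) - (⌊r * (b : ℝ)⌋ : ℝ) := by
      rw [← hr]; push_cast; ring
    nlinarith
  have h2 : r * ((a : ℝ) - b) - 1 < (c : ℝ) := by
    have hA : r * (a : ℝ) - 1 < (⌊r * (a : ℝ)⌋ : ℝ) := Int.sub_one_lt_floor _
    have hB : ((⌊r * (b : ℝ)⌋ : ℝ)) ≤ r * (b : ℝ) := Int.floor_le _
    have : (c : ℝ) = (⌊r * (a : ℝ)⌋ : ℝ) - (⌊r * (b : ℝ)⌋ : ℝ) := by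
      rw [← hr]; push_cast; ring
    nlinarith
  have habs : |r * ((a : ℝ) - b) - c| < 1 := by
    rw [abs_lt]; constructor <;> linarith
  rw [Metric.mem_ball, Real.dist_eq]
  have : r - (c : ℝ) / ((a : ℝ) - b) = (r * ((a : ℝ) - b) - c) / ((a : ℝ) - b) := by
    field_simp
  rw [this, abs_div, div_lt_div_iff₀ (abs_pos.mpr hd) (abs_pos.mpr hd)]
  calc |r * ((a : ℝ) - b) - c| * |(a : ℝ) - b| < 1 * |(a : ℝ) - b| := by
        exact mul_lt_mul_of_pos_right habs (abs_pos.mpr hd)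
    _ = 1 * |(a : ℝ) - b| := rfl

/-- Under non-degenerate channel uncertainty with joint density peak `f_max`
(in the sense that every marginal on a nonempty coordinate subset `s` has
density bounded by `f_max^|s|`), the probability that two distinct codewords
cast the same image sequence at receiver 2 is at most
`f_max^|s| · ∏_{t ∈ s} 2/|x(t) − ν(t)|`, where `s` is the set of channel uses
on which the codewords differ. -/
theorem alignment_prob_le_multiletter
    (n : ℕ) (hn : 1 ≤ n)
    (μ : Measure (Fin n → ℝ)) [IsProbabilityMeasure μ]
    (f_max : ℝ) (hf : 1 ≤ f_max)
    (hμ : ∀ s : Finset (Fin n), s.Nonempty →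
      ∀ B : Set ((t : s) → ℝ), MeasurableSet B →
        μ ((fun g (t : s) => g t) ⁻¹' B) ≤
          ENNReal.ofReal (f_max ^ s.card) * volume B)
    (x ν x2 ν2 : Fin n → ℤ) (hxν : x ≠ ν) :
    μ {g : Fin n → ℝ |
        ∀ t, ⌊g t * (x t : ℝ)⌋ + x2 t = ⌊g t * (ν t : ℝ)⌋ + ν2 t} ≤
      ENNReal.ofReal
        (f_max ^ (Finset.univ.filter (fun t => x t ≠ ν t)).card *
          ∏ t ∈ Finset.univ.filter (fun t => x t ≠ ν t),
            2 / |(x t : ℝ) - (ν t : ℝ)|) := by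
  set s : Finset (Fin n) := Finset.univ.filter (fun t => x t ≠ ν t) with hs_def
  have hs : s.Nonempty := by
    by_contra h
    apply hxν
    funext t
    by_contra ht
    exact h ⟨t, by simp [hs_def, ht]⟩
  -- ball for each coordinate
  set I : (t : s) → Set ℝ := fun t =>
    Metric.ball (((ν2 t - x2 t : ℤ) : ℝ) / ((x t : ℝ) - (ν t : ℝ)))
      (1 / |(x t : ℝ) - (ν t : ℝ)|) with hI_def
  set B : Set ((t : s) → ℝ) := Set.pi Set.univ I with hB_def
  have hBmeas : MeasurableSet B := MeasurableSet.univ_pi fun t => measurableSet_ball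
  have hxνt : ∀ t : s, ((x t : ℝ)) ≠ (ν t : ℝ) := by
    intro t
    have ht := t.2
    simp only [hs_def, Finset.mem_filter, Finset.mem_univ, true_and] at ht
    exact_mod_cast ht
  have hsub : {g : Fin n → ℝ |
        ∀ t, ⌊g t * (x t : ℝ)⌋ + x2 t = ⌊g t * (ν t : ℝ)⌋ + ν2 t} ⊆
      (fun g (t : s) => g (t : Fin n)) ⁻¹' B := by
    intro g hg
    simp only [Set.mem_preimage, hB_def, Set.mem_pi, Set.mem_univ, true_imp_iff]
    intro t
    apply floor_align_subset_ball (x t) (ν t) (hxνt t) (ν2 t - x2 t)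
    have := hg t
    simp only [Set.mem_setOf_eq]
    omega
  have hvolB : volume B = ∏ t ∈ s, ENNReal.ofReal (2 / |(x t : ℝ) - (ν t : ℝ)|) := by
    rw [hB_def, volume_pi_pi]
    rw [← Finset.prod_coe_sort s (fun t => ENNReal.ofReal (2 / |(x t : ℝ) - (ν t : ℝ)|))]
    refine Finset.prod_congr rfl fun t _ => ?_
    rw [hI_def, Real.volume_ball]
    congr 1
    rw [mul_one_div]
  calc μ {g : Fin n → ℝ |
        ∀ t, ⌊g t * (x t : ℝ)⌋ + x2 t = ⌊g t * (ν t : ℝ)⌋ + ν2 t}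
      ≤ μ ((fun g (t : s) => g (t : Fin n)) ⁻¹' B) := measure_mono hsub
    _ ≤ ENNReal.ofReal (f_max ^ s.card) * volume B := hμ s hs B hBmeas
    _ = ENNReal.ofReal (f_max ^ s.card *
          ∏ t ∈ s, 2 / |(x t : ℝ) - (ν t : ℝ)|) := by
        rw [hvolB, ENNReal.ofReal_mul (by positivity),
          ENNReal.ofReal_prod_of_nonneg (fun t _ => by positivity)]
end

section
/- Let n ≥ 1, Q ≥ 1 a natural number, and let μ be a probability measure on ℝⁿ and f_max ≥ 1 a real number such that for every nonempty subset s ⊆ {1,…,n} and every measurable set B ⊆ ℝ^s, the probability under μ that the coordinates indexed by s fall in B is at most f_max^{|s|} times the |s|-dimensional Lebesgue measure of B. Let C be a finite set of codewords x : {1,…,n} → ℤ with 0 ≤ x(t) ≤ Q for all t, let X2 assign to each codeword x a function X2(x) : {1,…,n} → ℤ, and fix ν ∈ C. Then the expected cardinality of the aligned image set of ν, namely ∑_{x ∈ C} μ({g ∈ ℝⁿ : ⌊g(t)·x(t)⌋ + X2(x)(t) = ⌊g(t)·ν(t)⌋ + X2(ν)(t) for all t}), is at most 1 + (2·f_max)ⁿ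 · (1 + 2·∑_{Δ=1}^{Q} 1/Δ)ⁿ. -/
open MeasureTheory

lemma floor_diff_vol (a b : ℤ) (h : a ≠ b) (c : ℤ) :
    volume {y : ℝ | ⌊y * (a : ℝ)⌋ - ⌊y * (b : ℝ)⌋ = c} ≤
      ENNReal.ofReal (2 / |(a : ℝ) - (b : ℝ)|) := by
  set d : ℝ := (a : ℝ) - (b : ℝ) with hd
  have hd0 : d ≠ 0 := sub_ne_zero.2 (by exact_mod_cast h)
  have hsub : {y : ℝ | ⌊y * (a : ℝ)⌋ - ⌊y * (b : ℝ)⌋ = c} ⊆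
      (fun y => y * d) ⁻¹' Set.Ioo ((c : ℝ) - 1) ((c : ℝ) + 1) := by
    intro y hy
    simp only [Set.mem_setOf_eq] at hy
    have h1 : (⌊y * (a : ℝ)⌋ : ℝ) ≤ y * a := Int.floor_le _
    have h2 : y * (a : ℝ) < ⌊y * (a : ℝ)⌋ + 1 := Int.lt_floor_add_one _
    have h3 : (⌊y * (b : ℝ)⌋ : ℝ) ≤ y * b := Int.floor_le _
    have h4 : y * (b : ℝ) < ⌊y * (b : ℝ)⌋ + 1 := Int.lt_floor_add_one _
    have hc : (⌊y * (a : ℝ)⌋ : ℝ) - ⌊y * (b : ℝ)⌋ = c := by exact_mod_cast congrArg (Int.cast : ℤ → ℝ) hy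
    have hyd : y * d = y * a - y * b := by rw [hd]; ring
    refine ⟨?_, ?_⟩
    · show (c : ℝ) - 1 < y * d
      rw [hyd]; linarith
    · show y * d < (c : ℝ) + 1
      rw [hyd]; linarith
  calc volume {y : ℝ | ⌊y * (a : ℝ)⌋ - ⌊y * (b : ℝ)⌋ = c}
      ≤ volume ((fun y => y * d) ⁻¹' Set.Ioo ((c : ℝ) - 1) ((c : ℝ) + 1)) :=
        measure_mono hsub
    _ = ENNReal.ofReal |d⁻¹| * volume (Set.Ioo ((c : ℝ) - 1) ((c : ℝ) + 1)) :=
        Real.volume_preimage_mul_right hd0 _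
    _ = ENNReal.ofReal (2 / |d|) := by
        rw [Real.volume_Ioo, ← ENNReal.ofReal_mul (abs_nonneg _)]
        congr 1
        rw [abs_inv]
        have h2' : (c : ℝ) + 1 - ((c : ℝ) - 1) = 2 := by ring
        rw [h2', inv_mul_eq_div]

/-- Under non-degenerate channel uncertainty with joint density peak `f_max`,
the expected cardinality of the aligned image set of any codeword `ν` in a
codebook `C` obeying the per-symbol power constraint `0 ≤ x(t) ≤ Q` is at most
`1 + (2 f_max)^n (1 + 2 ∑_{Δ=1}^{Q} 1/Δ)^n`. -/
theorem expected_aligned_image_set_card_le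
    (n : ℕ) (hn : 1 ≤ n) (Q : ℕ) (hQ : 1 ≤ Q)
    (μ : Measure (Fin n → ℝ)) [IsProbabilityMeasure μ]
    (f_max : ℝ) (hf : 1 ≤ f_max)
    (hμ : ∀ s : Finset (Fin n), s.Nonempty →
      ∀ B : Set ((t : s) → ℝ), MeasurableSet B →
        μ ((fun g (t : s) => g t) ⁻¹' B) ≤
          ENNReal.ofReal (f_max ^ s.card) * volume B)
    (C : Finset (Fin n → ℤ))
    (hC : ∀ x ∈ C, ∀ t, 0 ≤ x t ∧ x t ≤ (Q : ℤ))
    (X2 : (Fin n → ℤ) → (Fin n → ℤ)) (ν : Fin n → ℤ) (hν : ν ∈ C) :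
    ∑ x ∈ C,
        μ {g : Fin n → ℝ |
            ∀ t, ⌊g t * (x t : ℝ)⌋ + X2 x t = ⌊g t * (ν t : ℝ)⌋ + X2 ν t} ≤
      ENNReal.ofReal
        (1 + (2 * f_max) ^ n *
          (1 + 2 * ∑ Δ ∈ Finset.Icc 1 Q, 1 / (Δ : ℝ)) ^ n) := by
  classical
  set H : ℝ := ∑ Δ ∈ Finset.Icc 1 Q, 1 / (Δ : ℝ) with hH
  have hH0 : 0 ≤ H := Finset.sum_nonneg fun i _ => by positivity
  set a : ℤ → ℝ := fun d => if d = 0 then 1 else 2 * f_max / |(d : ℝ)| with ha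
  have ha_nonneg : ∀ d, 0 ≤ a d := by
    intro d
    by_cases hd : d = 0 <;> simp only [ha, hd, if_true, if_false]
    · norm_num
    · positivity
  -- per-codeword bound for x ≠ ν
  have key : ∀ x ∈ C, x ≠ ν →
      μ {g : Fin n → ℝ |
          ∀ t, ⌊g t * (x t : ℝ)⌋ + X2 x t = ⌊g t * (ν t : ℝ)⌋ + X2 ν t} ≤
      ENNReal.ofReal (∏ t, a (x t - ν t)) := by
    intro x hx hxν
    set s : Finset (Fin n) := Finset.univ.filter (fun t => x t ≠ ν t) with hs
    have hsne : s.Nonempty := by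
      obtain ⟨t, ht⟩ := Function.ne_iff.1 hxν
      exact ⟨t, by simp [hs, ht]⟩
    set A : (t : s) → Set ℝ := fun t =>
      {y : ℝ | ⌊y * ((x t : ℤ) : ℝ)⌋ - ⌊y * ((ν t : ℤ) : ℝ)⌋ = X2 ν t - X2 x t} with hA
    have hAm : ∀ t, MeasurableSet (A t) := by
      intro t
      have : A t = (fun y : ℝ => ⌊y * ((x t : ℤ) : ℝ)⌋ - ⌊y * ((ν t : ℤ) : ℝ)⌋) ⁻¹'
          {X2 ν t - X2 x t} := rfl
      rw [this]
      exact (((measurable_id.mul_const _).floor).sub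
        ((measurable_id.mul_const _).floor)) (measurableSet_singleton _)
    have hincl : {g : Fin n → ℝ |
          ∀ t, ⌊g t * (x t : ℝ)⌋ + X2 x t = ⌊g t * (ν t : ℝ)⌋ + X2 ν t} ⊆
        (fun g (t : s) => g t) ⁻¹' Set.univ.pi A := by
      intro g hg
      simp only [Set.mem_preimage, Set.mem_univ_pi]
      intro t
      have := hg t
      simp only [hA, Set.mem_setOf_eq]
      omega
    have hne : ∀ t : s, (x t : ℤ) ≠ ν t := by
      intro t
      have := t.2
      simp only [hs, Finset.mem_filter] at this
      exact this.2
    calc μ {g : Fin n → ℝ |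
          ∀ t, ⌊g t * (x t : ℝ)⌋ + X2 x t = ⌊g t * (ν t : ℝ)⌋ + X2 ν t}
        ≤ μ ((fun g (t : s) => g t) ⁻¹' Set.univ.pi A) := measure_mono hincl
      _ ≤ ENNReal.ofReal (f_max ^ s.card) * volume (Set.univ.pi A) :=
          hμ s hsne _ (MeasurableSet.univ_pi hAm)
      _ ≤ ENNReal.ofReal (f_max ^ s.card) *
            ∏ t : s, ENNReal.ofReal (2 / |((x t - ν t : ℤ) : ℝ)|) := by
          rw [volume_pi_pi]
          refine mul_le_mul_right (Finset.prod_le_prod' fun t _ => ?_) _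
          have := floor_diff_vol (x t) (ν t) (hne t) (X2 ν t - X2 x t)
          convert this using 2
          · rfl
          push_cast
          ring
      _ = ENNReal.ofReal (∏ t, a (x t - ν t)) := by
          rw [← ENNReal.ofReal_prod_of_nonneg (fun t _ => by positivity),
            ← ENNReal.ofReal_mul (by positivity)]
          congr 1
          rw [Finset.prod_coe_sort s (fun u => 2 / |((x u - ν u : ℤ) : ℝ)|)]
          have h1 : f_max ^ s.card = ∏ t ∈ s, f_max := by
            rw [Finset.prod_const]
          rw [h1, ← Finset.prod_mul_distrib]
          have h2 : ∏ t, a (x t - ν t) = ∏ t ∈ s, a (x t - ν t) := by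
            refine (Finset.prod_subset (Finset.subset_univ s) fun t _ hts => ?_).symm
            have hd : x t = ν t := by
              by_contra hne'
              exact hts (by simp [hs, hne'])
            simp [ha, hd]
          rw [h2]
          refine Finset.prod_congr rfl fun t ht => ?_
          have ht' : x t ≠ ν t := by
            simp only [hs, Finset.mem_filter, Finset.mem_univ, true_and] at ht
            exact ht
          have hd : x t - ν t ≠ 0 := sub_ne_zero.2 ht'
          simp only [ha, hd, if_false]
          ring
  -- superset finset of differences
  set T : Finset ℤ := insert 0 (((Finset.Icc 1 Q).image (fun k : ℕ => (k : ℤ))) ∪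
      ((Finset.Icc 1 Q).image (fun k : ℕ => -(k : ℤ)))) with hT
  have hmemT : ∀ x ∈ C, ∀ t, x t - ν t ∈ T := by
    intro x hx t
    have hx1 := (hC x hx t).1
    have hx2 := (hC x hx t).2
    have hν1 := (hC ν hν t).1
    have hν2 := (hC ν hν t).2
    rcases lt_trichotomy (x t - ν t) 0 with h | h | h
    · have : x t - ν t = -(((ν t - x t).toNat : ℕ) : ℤ) := by omega
      rw [this]
      refine Finset.mem_insert_of_mem (Finset.mem_union_right _ ?_)
      exact Finset.mem_image.2 ⟨(ν t - x t).toNat, Finset.mem_Icc.2 ⟨by omega, by omega⟩, rfl⟩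
    · simp [hT, h]
    · have : x t - ν t = (((x t - ν t).toNat : ℕ) : ℤ) := by omega
      rw [this]
      refine Finset.mem_insert_of_mem (Finset.mem_union_left _ ?_)
      exact Finset.mem_image.2 ⟨(x t - ν t).toNat, Finset.mem_Icc.2 ⟨by omega, by omega⟩, rfl⟩
  -- sum of weights over T
  have hsumT : ∑ j ∈ T, a j ≤ 2 * f_max * (1 + 2 * H) := by
    have h0 : (0 : ℤ) ∉ ((Finset.Icc 1 Q).image (fun k : ℕ => (k : ℤ))) ∪
        ((Finset.Icc 1 Q).image (fun k : ℕ => -(k : ℤ))) := by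
      simp only [Finset.mem_union, Finset.mem_image, Finset.mem_Icc]
      rintro (⟨k, ⟨hk1, _⟩, hk⟩ | ⟨k, ⟨hk1, _⟩, hk⟩) <;> omega
    have hdisj : Disjoint ((Finset.Icc 1 Q).image (fun k : ℕ => (k : ℤ)))
        ((Finset.Icc 1 Q).image (fun k : ℕ => -(k : ℤ))) := by
      rw [Finset.disjoint_left]
      simp only [Finset.mem_image, Finset.mem_Icc]
      rintro j ⟨k, ⟨hk1, _⟩, hk⟩ ⟨m, ⟨hm1, _⟩, hm⟩
      omega
    rw [hT, Finset.sum_insert h0, Finset.sum_union hdisj,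
      Finset.sum_image (fun k _ m _ h => by exact_mod_cast h),
      Finset.sum_image (fun k _ m _ h => by omega)]
    have e1 : ∀ k ∈ Finset.Icc 1 Q, a (k : ℤ) = 2 * f_max * (1 / (k : ℝ)) := by
      intro k hk
      have hk1 : 1 ≤ k := (Finset.mem_Icc.1 hk).1
      have : ((k : ℤ) : ℝ) = (k : ℝ) := by push_cast; ring
      simp only [ha, if_neg (by omega : (k : ℤ) ≠ 0), this,
        abs_of_nonneg (by positivity : (0:ℝ) ≤ (k : ℝ))]
      field_simp
    have e2 : ∀ k ∈ Finset.Icc 1 Q, a (-(k : ℤ)) = 2 * f_max * (1 / (k : ℝ)) := by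
      intro k hk
      have hk1 : 1 ≤ k := (Finset.mem_Icc.1 hk).1
      have hcast : (Int.cast (-(k : ℤ)) : ℝ) = -(k : ℝ) := by push_cast; ring
      simp only [ha, if_neg (by omega : -(k : ℤ) ≠ 0), hcast, abs_neg,
        abs_of_nonneg (by positivity : (0:ℝ) ≤ (k : ℝ))]
      field_simp
    rw [Finset.sum_congr rfl e1, Finset.sum_congr rfl e2, ← Finset.mul_sum, ← hH]
    have ha0 : a 0 = 1 := by simp [ha]
    rw [ha0]
    nlinarith [mul_nonneg (by linarith : (0:ℝ) ≤ 2 * f_max) hH0]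
  -- sum over erase
  have hsum_erase : ∑ x ∈ C.erase ν, (∏ t, a (x t - ν t)) ≤
      (2 * f_max) ^ n * (1 + 2 * H) ^ n := by
    have hinj : ∀ x ∈ C.erase ν, ∀ y ∈ C.erase ν,
        (fun z : Fin n → ℤ => z - ν) x = (fun z => z - ν) y → x = y := by
      intro x _ y _ h
      have := congrArg (· + ν) h
      simpa using this
    have himg : ∑ x ∈ C.erase ν, (∏ t, a (x t - ν t)) =
        ∑ d ∈ (C.erase ν).image (fun z => z - ν), ∏ t, a (d t) := by
      rw [Finset.sum_image hinj]
      rfl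
    have hsub : (C.erase ν).image (fun z => z - ν) ⊆ Fintype.piFinset (fun _ : Fin n => T) := by
      intro d hd
      obtain ⟨x, hx, rfl⟩ := Finset.mem_image.1 hd
      exact Fintype.mem_piFinset.2 fun t => hmemT x (Finset.mem_of_mem_erase hx) t
    calc ∑ x ∈ C.erase ν, (∏ t, a (x t - ν t))
        = ∑ d ∈ (C.erase ν).image (fun z => z - ν), ∏ t, a (d t) := himg
      _ ≤ ∑ d ∈ Fintype.piFinset (fun _ : Fin n => T), ∏ t, a (d t) :=
          Finset.sum_le_sum_of_subset_of_nonneg hsub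
            (fun d _ _ => Finset.prod_nonneg fun t _ => ha_nonneg _)
      _ = (∑ j ∈ T, a j) ^ n := by
          rw [← Finset.prod_univ_sum]
          simp [Finset.prod_const]
      _ ≤ (2 * f_max * (1 + 2 * H)) ^ n := by
          refine pow_le_pow_left₀ (Finset.sum_nonneg fun j _ => ha_nonneg _) hsumT n
      _ = (2 * f_max) ^ n * (1 + 2 * H) ^ n := mul_pow _ _ _
  -- assemble
  rw [← Finset.add_sum_erase C _ hν]
  have h1 : μ {g : Fin n → ℝ |
      ∀ t, ⌊g t * (ν t : ℝ)⌋ + X2 ν t = ⌊g t * (ν t : ℝ)⌋ + X2 ν t} ≤ 1 :=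
    prob_le_one
  have h2 : ∑ x ∈ C.erase ν,
      μ {g : Fin n → ℝ |
          ∀ t, ⌊g t * (x t : ℝ)⌋ + X2 x t = ⌊g t * (ν t : ℝ)⌋ + X2 ν t} ≤
      ENNReal.ofReal ((2 * f_max) ^ n * (1 + 2 * H) ^ n) := by
    calc ∑ x ∈ C.erase ν,
        μ {g : Fin n → ℝ |
            ∀ t, ⌊g t * (x t : ℝ)⌋ + X2 x t = ⌊g t * (ν t : ℝ)⌋ + X2 ν t}
        ≤ ∑ x ∈ C.erase ν, ENNReal.ofReal (∏ t, a (x t - ν t)) :=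
          Finset.sum_le_sum fun x hx =>
            key x (Finset.mem_of_mem_erase hx) (Finset.ne_of_mem_erase hx)
      _ = ENNReal.ofReal (∑ x ∈ C.erase ν, ∏ t, a (x t - ν t)) :=
          (ENNReal.ofReal_sum_of_nonneg fun x _ =>
            Finset.prod_nonneg fun t _ => ha_nonneg _).symm
      _ ≤ ENNReal.ofReal ((2 * f_max) ^ n * (1 + 2 * H) ^ n) :=
          ENNReal.ofReal_le_ofReal hsum_erase
  calc μ {g : Fin n → ℝ |
        ∀ t, ⌊g t * (ν t : ℝ)⌋ + X2 ν t = ⌊g t * (ν t : ℝ)⌋ + X2 ν t} +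
      ∑ x ∈ C.erase ν,
        μ {g : Fin n → ℝ |
            ∀ t, ⌊g t * (x t : ℝ)⌋ + X2 x t = ⌊g t * (ν t : ℝ)⌋ + X2 ν t}
      ≤ 1 + ENNReal.ofReal ((2 * f_max) ^ n * (1 + 2 * H) ^ n) := add_le_add h1 h2
    _ = ENNReal.ofReal (1 + (2 * f_max) ^ n * (1 + 2 * H) ^ n) := by
        rw [ENNReal.ofReal_add (by norm_num) (by positivity), ENNReal.ofReal_one]
end

section
/- Let m ≥ 1, let j₀ ∈ {1,…,m}, let a : {1,…,m} → ℝ fix all coefficients except the j₀-th, and let x, x' : {1,…,m} → ℤ with x'_{j₀} ≠ x_{j₀}. Let μ be a probability measure on ℝ and f_max > 0 with μ(A) ≤ f_max·λ(A) for every measurable A ⊆ ℝ, where λ is Lebesgue measure. Then the probability under μ (governing the coefficient a_{j₀}, with all other coefficients a_j fixed) of the alignment event {a₀ ∈ ℝ : ∑_{j ≠ j₀} ⌊a_j·x'_j⌋ + ⌊a₀·x'_{j₀}⌋ = ∑_{j ≠ j₀} ⌊a_j·x_j⌋ + ⌊a₀·x_{j₀}⌋} is at most 2·f_max/|x'_{j₀}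 − x_{j₀}|. -/
open MeasureTheory

/-- In the K-user deterministic model, with all coefficients except the
`j₀`-th fixed and the unknown coefficient distributed with density bounded by
`f_max`, the probability that two input tuples differing in the `j₀`-th symbol
cast the same image at receiver `k` is at most `2·f_max/|x'_{j₀} − x_{j₀}|`. -/
theorem alignment_prob_le_K_user
    (m : ℕ) (hm : 1 ≤ m) (j0 : Fin m) (a : Fin m → ℝ)
    (x x' : Fin m → ℤ) (hx : x' j0 ≠ x j0)
    (μ : Measure ℝ) [IsProbabilityMeasure μ] (f_max : ℝ) (hf : 0 < f_max)
    (hμ : ∀ A : Set ℝ, MeasurableSet A →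
      μ A ≤ ENNReal.ofReal f_max * volume A) :
    μ {a0 : ℝ |
        ∑ j ∈ Finset.univ.erase j0, ⌊a j * (x' j : ℝ)⌋ + ⌊a0 * (x' j0 : ℝ)⌋ =
        ∑ j ∈ Finset.univ.erase j0, ⌊a j * (x j : ℝ)⌋ + ⌊a0 * (x j0 : ℝ)⌋} ≤
      ENNReal.ofReal (2 * f_max / |(x' j0 : ℝ) - (x j0 : ℝ)|) := by
  set d : ℝ := (x' j0 : ℝ) - (x j0 : ℝ) with hd
  have hd0 : d ≠ 0 := by
    have : (x' j0 : ℝ) ≠ (x j0 : ℝ) := by exact_mod_cast hx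
    simpa [hd, sub_eq_zero] using this
  set c : ℤ := (∑ j ∈ Finset.univ.erase j0, ⌊a j * (x j : ℝ)⌋) -
      ∑ j ∈ Finset.univ.erase j0, ⌊a j * (x' j : ℝ)⌋ with hc
  set B : Set ℝ := (fun t : ℝ => t * d) ⁻¹' Set.Ioo ((c : ℝ) - 1) ((c : ℝ) + 1) with hB
  have hsub : {a0 : ℝ |
        ∑ j ∈ Finset.univ.erase j0, ⌊a j * (x' j : ℝ)⌋ + ⌊a0 * (x' j0 : ℝ)⌋ =
        ∑ j ∈ Finset.univ.erase j0, ⌊a j * (x j : ℝ)⌋ + ⌊a0 * (x j0 : ℝ)⌋} ⊆ B := by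
    intro t ht
    simp only [hB, Set.mem_preimage, Set.mem_Ioo]
    simp only [Set.mem_setOf_eq] at ht
    have hfl : ⌊t * (x' j0 : ℝ)⌋ - ⌊t * (x j0 : ℝ)⌋ = c := by
      rw [hc]; omega
    have hflR : (⌊t * (x' j0 : ℝ)⌋ : ℝ) - (⌊t * (x j0 : ℝ)⌋ : ℝ) = (c : ℝ) := by
      exact_mod_cast congrArg (fun z : ℤ => (z : ℝ)) hfl
    have h1 := Int.floor_le (t * (x' j0 : ℝ))
    have h2 := Int.lt_floor_add_one (t * (x j0 : ℝ))
    have h3 := Int.floor_le (t * (x j0 : ℝ))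
    have h4 := Int.lt_floor_add_one (t * (x' j0 : ℝ))
    have htd : t * d = t * (x' j0 : ℝ) - t * (x j0 : ℝ) := by rw [hd]; ring
    constructor <;> linarith
  have hBmeas : MeasurableSet B :=
    (measurableSet_Ioo).preimage (measurable_id.mul_const d)
  have hBvol : volume B = ENNReal.ofReal (2 / |d|) := by
    rcases lt_or_gt_of_ne hd0 with hneg | hpos
    · rw [hB, Set.preimage_mul_const_Ioo_of_neg _ _ hneg, Real.volume_Ioo,
        abs_of_neg hneg]
      have hnd : -d ≠ 0 := neg_ne_zero.mpr hd0
      congr 1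
      field_simp
      ring
    · rw [hB, Set.preimage_mul_const_Ioo₀ _ _ hpos, Real.volume_Ioo, abs_of_pos hpos]
      congr 1
      field_simp
      ring
  calc μ _ ≤ μ B := measure_mono hsub
    _ ≤ ENNReal.ofReal f_max * volume B := hμ B hBmeas
    _ = ENNReal.ofReal (2 * f_max / |d|) := by
        rw [hBvol, ← ENNReal.ofReal_mul hf.le]
        congr 1
        ring
end

section
/- Let Q ≥ 1 be a natural number, c > 0 a real number, and let ρ : ℤ → ℝ be nonnegative with ∑_{k ∈ ℤ} ρ_k = 1 and ∑_{k ∈ ℤ} k²·ρ_k ≤ c·Q² (the sums being convergent). Define the quantized mass function ρ̃ : ℤ → ℝ by ρ̃_m = ∑_{k = m·Q}^{(m+1)·Q − 1} ρ_k. Then the binary Shannon entropy of ρ̃ satisfies ∑_{m ∈ ℤ} ρ̃_m · log₂(1/ρ̃_m) ≤ (5 + 4·max(1, c))/(e·ln 2) + 6·c, where terms with ρ̃_m = 0 contribute zero. -/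
open Real Finset

/-- `x log(1/x) ≤ t·x + e^{-t-1}` for `x ≥ 0`. -/
lemma qeb_ent_key (p t : ℝ) (hp : 0 ≤ p) :
    p * Real.log (1 / p) ≤ t * p + Real.exp (-t - 1) := by
  rcases eq_or_lt_of_le hp with h | h
  · simp [← h, (Real.exp_pos (-t - 1)).le]
  · have h1 := Real.log_le_sub_one_of_pos (div_pos (Real.exp_pos (-t - 1)) h)
    rw [Real.log_div (Real.exp_ne_zero _) (ne_of_gt h), Real.log_exp] at h1
    have h2 := mul_le_mul_of_nonneg_left h1 hp
    have h3 : p * (Real.exp (-t - 1) / p) = Real.exp (-t - 1) := by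
      field_simp
    rw [one_div, Real.log_inv]
    nlinarith [h2, h3]

/-- quotient identification for the blocks -/
lemma qeb_ediv_eq {Z m k : ℤ} (hZ : 0 < Z)
    (hk : k ∈ Finset.Icc (m * Z) ((m + 1) * Z - 1)) : k / Z = m := by
  rw [Finset.mem_Icc] at hk
  have hk' : k = (k - m * Z) + m * Z := by ring
  rw [hk', Int.add_mul_ediv_right _ _ (ne_of_gt hZ),
    Int.ediv_eq_zero_of_lt (by linarith [hk.1]) (by linarith [hk.2]), zero_add]

lemma qeb_disj {Z : ℤ} (hZ : 0 < Z) (F : Finset ℤ) :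
    (↑F : Set ℤ).PairwiseDisjoint
      (fun m => Finset.Icc (m * Z) ((m + 1) * Z - 1)) := by
  intro a _ b _ hab
  simp only [Function.onFun]
  rw [Finset.disjoint_left]
  intro k hka hkb
  exact hab ((qeb_ediv_eq hZ hka).symm.trans (qeb_ediv_eq hZ hkb))

/-- block-sum domination -/
lemma qeb_blocks_le {Z : ℤ} (hZ : 0 < Z) (f : ℤ → ℝ) (hf : ∀ k, 0 ≤ f k)
    (hs : Summable f) (F : Finset ℤ) :
    ∑ m ∈ F, ∑ k ∈ Finset.Icc (m * Z) ((m + 1) * Z - 1), f k ≤ ∑' k, f k := by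
  rw [← Finset.sum_biUnion (qeb_disj hZ F)]
  exact Summable.sum_le_tsum _ (fun k _ => hf k) hs

/-- geometric sum over ℤ -/
lemma qeb_exp_hasSum :
    HasSum (fun m : ℤ => Real.exp (-(m.natAbs : ℝ) - 1))
      (Real.exp (-1) * (1 - Real.exp (-1))⁻¹ + Real.exp (-2) * (1 - Real.exp (-1))⁻¹) := by
  have h0 : (0:ℝ) ≤ Real.exp (-1) := (Real.exp_pos _).le
  have h1 : Real.exp (-1) < 1 := Real.exp_lt_one_iff.2 (by norm_num)
  have hgeo := hasSum_geometric_of_lt_one h0 h1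
  have hf : HasSum (fun n : ℕ => Real.exp (-(n : ℝ) - 1))
      (Real.exp (-1) * (1 - Real.exp (-1))⁻¹) := by
    have : (fun n : ℕ => Real.exp (-(n : ℝ) - 1))
        = fun n : ℕ => Real.exp (-1) * Real.exp (-1) ^ n := by
      funext n
      rw [← Real.exp_nat_mul, ← Real.exp_add]
      ring_nf
    rw [this]
    exact hgeo.mul_left _
  have hg : HasSum (fun n : ℕ => Real.exp (-(n : ℝ) - 2))
      (Real.exp (-2) * (1 - Real.exp (-1))⁻¹) := by
    have : (fun n : ℕ => Real.exp (-(n : ℝ) - 2))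
        = fun n : ℕ => Real.exp (-2) * Real.exp (-1) ^ n := by
      funext n
      rw [← Real.exp_nat_mul, ← Real.exp_add]
      ring_nf
    rw [this]
    exact hgeo.mul_left _
  have key : (fun m : ℤ => Real.exp (-(m.natAbs : ℝ) - 1))
      = Int.rec (fun n : ℕ => Real.exp (-(n : ℝ) - 1))
          (fun n : ℕ => Real.exp (-((n : ℝ)) - 2)) := by
    funext m
    cases m with
    | ofNat n => simp
    | negSucc n =>
        show Real.exp (-(((Int.negSucc n).natAbs : ℝ)) - 1) = _
        rw [Int.natAbs_negSucc]
        push_cast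
        ring_nf
  rw [key]
  exact hf.int_rec hg

/-- numeric inequality -/
lemma qeb_numeric :
    2 + (Real.exp (-1) * (1 - Real.exp (-1))⁻¹ + Real.exp (-2) * (1 - Real.exp (-1))⁻¹)
      ≤ 9 / Real.exp 1 := by
  have hy : Real.exp (-1) = (Real.exp 1)⁻¹ := Real.exp_neg 1
  set y := Real.exp (-1) with hydef
  have hy2 : Real.exp (-2) = y * y := by
    rw [hydef, ← Real.exp_add]; norm_num
  have hye : y * Real.exp 1 = 1 := by
    rw [hy]; field_simp
  have he1 := Real.exp_one_gt_d9
  have he2 := Real.exp_one_lt_d9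
  have hypos : 0 < y := Real.exp_pos _
  have hy1 : y ≤ 0.38 := by nlinarith
  have hy0 : 0.35 ≤ y := by nlinarith
  have h1y : (0:ℝ) < 1 - y := by linarith
  have h9 : 9 / Real.exp 1 = 9 * y := by
    rw [hy]; field_simp
  rw [hy2, h9]
  have hcomb : y * (1 - y)⁻¹ + y * y * (1 - y)⁻¹ = (y + y * y) / (1 - y) := by
    field_simp
  rw [hcomb]
  have hfin : (y + y * y) / (1 - y) ≤ 9 * y - 2 := by
    rw [div_le_iff₀ h1y]
    nlinarith [mul_nonneg (sub_nonneg.2 hy0) (sub_nonneg.2 hy1)]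
  linarith

/-- The binary Shannon entropy of the quantized mass function
`ρ̃_m = ∑_{k=mQ}^{(m+1)Q−1} ρ_k` of an integer-valued symbol with second moment
at most `c·Q²` is at most `(5 + 4·max(1,c))/(e·ln 2) + 6c`. (Terms with
`ρ̃_m = 0` contribute zero, consistent with Lean's conventions `1/0 = 0` and
`log 0 = 0`.) -/
theorem quantized_entropy_bound
    (Q : ℕ) (hQ : 1 ≤ Q) (c : ℝ) (hc : 0 < c)
    (ρ : ℤ → ℝ) (hρ : ∀ k, 0 ≤ ρ k)
    (hsum1 : Summable ρ) (hnorm : ∑' k : ℤ, ρ k = 1)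
    (hsum2 : Summable (fun k : ℤ => (k : ℝ) ^ 2 * ρ k))
    (hmom : ∑' k : ℤ, (k : ℝ) ^ 2 * ρ k ≤ c * (Q : ℝ) ^ 2) :
    Summable (fun m : ℤ =>
      (∑ k ∈ Finset.Icc (m * (Q : ℤ)) ((m + 1) * (Q : ℤ) - 1), ρ k) *
        Real.logb 2
          (1 / ∑ k ∈ Finset.Icc (m * (Q : ℤ)) ((m + 1) * (Q : ℤ) - 1), ρ k)) ∧
    ∑' m : ℤ,
        (∑ k ∈ Finset.Icc (m * (Q : ℤ)) ((m + 1) * (Q : ℤ) - 1), ρ k) *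
          Real.logb 2
            (1 / ∑ k ∈ Finset.Icc (m * (Q : ℤ)) ((m + 1) * (Q : ℤ) - 1), ρ k) ≤
      (5 + 4 * max 1 c) / (Real.exp 1 * Real.log 2) + 6 * c := by
  have hZ : (0:ℤ) < (Q : ℤ) := by exact_mod_cast hQ
  have hQR : (0:ℝ) < (Q : ℝ) := by exact_mod_cast hQ
  set Z : ℤ := (Q : ℤ) with hZdef
  set P : ℤ → ℝ := fun m => ∑ k ∈ Finset.Icc (m * Z) ((m + 1) * Z - 1), ρ k with hPdef
  have hP0 : ∀ m, 0 ≤ P m := fun m => Finset.sum_nonneg fun k _ => hρ k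
  have hP1 : ∀ m, P m ≤ 1 := by
    intro m
    rw [← hnorm]
    exact Summable.sum_le_tsum _ (fun k _ => hρ k) hsum1
  -- the weight function and its bound
  set w : ℤ → ℝ := fun k => ((k / Z : ℤ) : ℝ) ^ 2 * ρ k with hwdef
  have hw0 : ∀ k, 0 ≤ w k := fun k => mul_nonneg (sq_nonneg _) (hρ k)
  set u : ℤ → ℝ := fun k => 2 / (Q:ℝ)^2 * ((k:ℝ)^2 * ρ k) + 2 * ρ k with hudef
  have hwu : ∀ k, w k ≤ u k := by
    intro k
    have hd := Int.mul_ediv_add_emod k Z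
    have hr0 : 0 ≤ k % Z := Int.emod_nonneg k (ne_of_gt hZ)
    have hrQ : k % Z < Z := Int.emod_lt_of_pos k hZ
    set d : ℤ := k / Z with hddef
    set r : ℤ := k % Z with hrdef
    have hk : (k : ℝ) = (Q:ℝ) * (d:ℝ) + (r:ℝ) := by exact_mod_cast hd.symm
    have hr0' : (0:ℝ) ≤ (r:ℝ) := by exact_mod_cast hr0
    have hrQ' : (r:ℝ) ≤ (Q:ℝ) := by exact_mod_cast hrQ.le
    have key : ((d:ℝ))^2 * (Q:ℝ)^2 ≤ 2 * (k:ℝ)^2 + 2 * (Q:ℝ)^2 := by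
      rw [hk]
      nlinarith [sq_nonneg ((Q:ℝ) * d + 2 * r),
        mul_nonneg (sub_nonneg.2 hrQ') (by linarith : (0:ℝ) ≤ (Q:ℝ) + r)]
    have key2 : ((d:ℝ))^2 ≤ 2 / (Q:ℝ)^2 * (k:ℝ)^2 + 2 := by
      rw [← sub_nonneg]
      have heq : 2 / (Q:ℝ)^2 * (k:ℝ)^2 + 2 - (d:ℝ)^2
          = (2 * (k:ℝ)^2 + 2 * (Q:ℝ)^2 - (d:ℝ)^2 * (Q:ℝ)^2) / (Q:ℝ)^2 := by
        have hQne : (Q:ℝ) ≠ 0 := ne_of_gt hQR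
        field_simp
      rw [heq]
      apply div_nonneg (by linarith) (by positivity)
    calc w k = ((d:ℝ))^2 * ρ k := rfl
      _ ≤ (2 / (Q:ℝ)^2 * (k:ℝ)^2 + 2) * ρ k := by
          exact mul_le_mul_of_nonneg_right key2 (hρ k)
      _ = u k := by simp only [hudef]; ring
  have husum : Summable u := (hsum2.mul_left _).add (hsum1.mul_left 2)
  have hwsum : Summable w := Summable.of_nonneg_of_le hw0 hwu husum
  have hwts : ∑' k, w k ≤ 2 * c + 2 := by
    calc ∑' k, w k ≤ ∑' k, u k := Summable.tsum_le_tsum hwu hwsum husum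
      _ = 2 / (Q:ℝ)^2 * (∑' k : ℤ, (k:ℝ)^2 * ρ k) + 2 * ∑' k : ℤ, ρ k := by
          rw [Summable.tsum_add (hsum2.mul_left _) (hsum1.mul_left 2),
            tsum_mul_left, tsum_mul_left]
      _ ≤ 2 / (Q:ℝ)^2 * (c * (Q:ℝ)^2) + 2 * 1 := by
          have hmul := mul_le_mul_of_nonneg_left hmom
            (by positivity : (0:ℝ) ≤ 2 / (Q:ℝ)^2)
          rw [hnorm]
          linarith
      _ = 2 * c + 2 := by field_simp
  -- second moment of P
  have hkey : ∀ F : Finset ℤ, ∑ m ∈ F, ((m:ℝ))^2 * P m ≤ 2 * c + 2 := by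
    intro F
    have heq : ∑ m ∈ F, ((m:ℝ))^2 * P m
        = ∑ m ∈ F, ∑ k ∈ Finset.Icc (m * Z) ((m + 1) * Z - 1), w k := by
      refine Finset.sum_congr rfl fun m _ => ?_
      rw [hPdef, Finset.mul_sum]
      refine Finset.sum_congr rfl fun k hk => ?_
      rw [hwdef]
      simp only
      rw [qeb_ediv_eq hZ hk]
    rw [heq]
    exact (qeb_blocks_le hZ w hw0 hwsum F).trans hwts
  have hM : Summable (fun m : ℤ => ((m:ℝ))^2 * P m) :=
    summable_of_sum_le (fun m => mul_nonneg (sq_nonneg _) (hP0 m)) hkey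
  have hMt : ∑' m : ℤ, ((m:ℝ))^2 * P m ≤ 2 * c + 2 := Summable.tsum_le_of_sum_le hM hkey
  -- entropy terms
  have hlog2 : 0 < Real.log 2 := Real.log_pos one_lt_two
  set Ent : ℤ → ℝ := fun m => P m * Real.logb 2 (1 / P m) with hEdef
  have hEnt0 : ∀ m, 0 ≤ Ent m := by
    intro m
    rcases eq_or_lt_of_le (hP0 m) with h | h
    · simp [hEdef, ← h]
    · refine mul_nonneg (hP0 m) (Real.logb_nonneg one_lt_two ?_)
      rw [le_div_iff₀ h, one_mul]
      exact hP1 m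
  set bnd : ℤ → ℝ := fun m =>
    (((m:ℝ))^2 * P m + Real.exp (-(m.natAbs : ℝ) - 1)) / Real.log 2 with hbdef
  have hEntle : ∀ m, Ent m ≤ bnd m := by
    intro m
    have h1 : Ent m = P m * Real.log (1 / P m) / Real.log 2 := by
      rw [hEdef]
      simp only [Real.logb]
      ring
    rw [h1, hbdef]
    have h3 : ((m.natAbs:ℝ)) * P m ≤ ((m:ℝ))^2 * P m := by
      apply mul_le_mul_of_nonneg_right ?_ (hP0 m)
      have hna : ((m.natAbs:ℝ))^2 = ((m:ℝ))^2 := by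
        rw [Nat.cast_natAbs, Int.cast_abs, sq_abs]
      have hle : (m.natAbs:ℝ) ≤ ((m.natAbs:ℝ))^2 := by
        exact_mod_cast Nat.cast_le.2 (Nat.le_self_pow two_ne_zero m.natAbs)
      linarith
    have key : P m * Real.log (1 / P m)
        ≤ ((m:ℝ))^2 * P m + Real.exp (-(m.natAbs:ℝ) - 1) := by
      have h2 := qeb_ent_key (P m) ((m.natAbs : ℝ)) (hP0 m)
      linarith
    exact (div_le_div_iff_of_pos_right hlog2).2 key
  have hEsum := qeb_exp_hasSum
  set A : ℝ := Real.exp (-1) * (1 - Real.exp (-1))⁻¹ with hAdef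
  set B : ℝ := Real.exp (-2) * (1 - Real.exp (-1))⁻¹ with hBdef
  have hbsum : Summable bnd := (hM.add hEsum.summable).div_const _
  have hEntsum : Summable Ent := Summable.of_nonneg_of_le hEnt0 hEntle hbsum
  have hts : ∑' m, Ent m ≤ (2 * c + 2 + (A + B)) / Real.log 2 := by
    calc ∑' m, Ent m ≤ ∑' m, bnd m := Summable.tsum_le_tsum hEntle hEntsum hbsum
      _ = ((∑' m : ℤ, ((m:ℝ))^2 * P m)
            + ∑' m : ℤ, Real.exp (-(m.natAbs : ℝ) - 1)) / Real.log 2 := by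
          rw [hbdef, tsum_div_const, Summable.tsum_add hM hEsum.summable]
      _ = ((∑' m : ℤ, ((m:ℝ))^2 * P m) + (A + B)) / Real.log 2 := by
          rw [hEsum.tsum_eq]
      _ ≤ (2 * c + 2 + (A + B)) / Real.log 2 :=
          (div_le_div_iff_of_pos_right hlog2).2 (by linarith)
  have hfinal : (2 * c + 2 + (A + B)) / Real.log 2
      ≤ (5 + 4 * max 1 c) / (Real.exp 1 * Real.log 2) + 6 * c := by
    have hnum : 2 + (A + B) ≤ 9 / Real.exp 1 := qeb_numeric
    have he : (0:ℝ) < Real.exp 1 := Real.exp_pos 1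
    have h1 : (2 * c + 2 + (A + B)) / Real.log 2
        = (2 + (A + B)) / Real.log 2 + 2 * c / Real.log 2 := by ring
    rw [h1]
    have h2 : (2 + (A + B)) / Real.log 2 ≤ (9 / Real.exp 1) / Real.log 2 :=
      (div_le_div_iff_of_pos_right hlog2).2 hnum
    have h3 : (9 / Real.exp 1) / Real.log 2 = 9 / (Real.exp 1 * Real.log 2) := by
      rw [div_div]
    have h4 : 9 / (Real.exp 1 * Real.log 2)
        ≤ (5 + 4 * max 1 c) / (Real.exp 1 * Real.log 2) := by
      have hm1 : (1:ℝ) ≤ max 1 c := le_max_left _ _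
      have hD : (0:ℝ) < Real.exp 1 * Real.log 2 := by positivity
      exact (div_le_div_iff_of_pos_right hD).2 (by linarith)
    have h5 : 2 * c / Real.log 2 ≤ 6 * c := by
      rw [div_le_iff₀ hlog2]
      nlinarith [Real.log_two_gt_d9]
    linarith
  exact ⟨hEntsum, hts.trans hfinal⟩
end
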